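/- arXiv:2512.07468 — 2 statements merged into one kernel-verified Lean document; each statement's English description precedes it below -/
import Mathlib

section
/- Let $H_1, H_2$ be finite-dimensional complex inner product spaces and let $B$ be a Hermitian operator on $H_1 \otimes H_2$. Suppose that for all $t \in \mathbb{R}$ there exist unitaries $U_1(t)$ on $H_1$ and $U_2(t)$ on $H_2$ with $e^{-itB} = U_1(t) \otimes U_2(t)$. Then $B = A_1 \otimes \mathrm{id} + \mathrm{id} \otimes A_2$ for some Hermitian operators $A_1$ on $H_1$ and $A_2$ on $H_2$. -/
/-!
Entries of a Kronecker product `U = U₁ ⊗ U₂` satisfy the quadratic identities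
`U(ij,kl) U(i₀j₀,k₀l₀) = U(ij₀,kl₀) U(i₀j,k₀l)`. Applied to `U(t) = exp(-itB)`, which is `1` at
`t = 0`, differentiation gives `B(ij,kl) + δ_ik δ_jl B(i₀j₀,i₀j₀) = δ_jl B(ij₀,kj₀) + δ_ik B(i₀j,i₀l)`,
i.e. `B` is the sum of `A₁ ⊗ 1` and `1 ⊗ A₂` for two Hermitian slices `A₁`, `A₂` of `B`.
-/

open Kronecker Matrix

attribute [local instance] Matrix.linftyOpNormedRing Matrix.linftyOpNormedAlgebra

lemma hasDerivAt_exp_neg_I_mul_smul_apply {n : Type*} [Fintype n] [DecidableEq n]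
    (A : Matrix n n ℂ) (p q : n) :
    HasDerivAt (fun t : ℝ => NormedSpace.exp ((-(Complex.I * t)) • A) p q)
      (-Complex.I * A p q) 0 := by
  have h := hasDerivAt_exp_smul_const (𝕂 := ℝ) (-Complex.I • A) 0
  rw [zero_smul, NormedSpace.exp_zero, one_mul] at h
  refine ((entryLinearMap ℝ ℂ p q).toContinuousLinearMap.hasFDerivAt.comp_hasDerivAt 0 h
    ).congr_of_eventuallyEq (.of_forall fun t => ?_)
  change _ = NormedSpace.exp (t • -Complex.I • A) p q
  rw [← Complex.coe_smul, smul_smul, mul_neg, mul_comm]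

lemma Matrix.kronecker_apply_mul_kronecker_apply {R ι ι' κ κ' : Type*} [CommSemiring R]
    (U₁ : Matrix ι ι' R) (U₂ : Matrix κ κ' R) (i i₀ : ι) (k k₀ : ι') (j j₀ : κ) (l l₀ : κ') :
    (U₁ ⊗ₖ U₂) (i, j) (k, l) * (U₁ ⊗ₖ U₂) (i₀, j₀) (k₀, l₀) =
      (U₁ ⊗ₖ U₂) (i, j₀) (k, l₀) * (U₁ ⊗ₖ U₂) (i₀, j) (k₀, l) := by
  simp only [kronecker_apply]
  ring

theorem add_smul_one_eq_submatrix_kronecker_add_of_hasDerivAt {𝕜 𝔸 ι κ : Type*}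
    [NontriviallyNormedField 𝕜] [NormedCommRing 𝔸] [NormedAlgebra 𝕜 𝔸]
    [DecidableEq ι] [DecidableEq κ] {f : 𝕜 → Matrix (ι × κ) (ι × κ) 𝔸}
    {D : Matrix (ι × κ) (ι × κ) 𝔸} {t₀ : 𝕜}
    (hf : ∀ t, ∃ (U₁ : Matrix ι ι 𝔸) (U₂ : Matrix κ κ 𝔸), f t = U₁ ⊗ₖ U₂) (h₀ : f t₀ = 1)
    (hD : ∀ p q, HasDerivAt (fun t => f t p q) (D p q) t₀) (i₀ : ι) (j₀ : κ) :
    D + D (i₀, j₀) (i₀, j₀) • 1 =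
      D.submatrix (·, j₀) (·, j₀) ⊗ₖ 1 + 1 ⊗ₖ D.submatrix (Prod.mk i₀) (Prod.mk i₀) := by
  ext ⟨i, j⟩ ⟨k, l⟩
  have hcross : (fun t => f t (i, j) (k, l)) * (fun t => f t (i₀, j₀) (i₀, j₀)) =
      (fun t => f t (i, j₀) (k, j₀)) * (fun t => f t (i₀, j) (i₀, l)) := by
    funext t
    obtain ⟨U₁, U₂, hU⟩ := hf t
    simp only [Pi.mul_apply, hU, kronecker_apply_mul_kronecker_apply]
  have hderiv := (hD (i, j) (k, l)).mul (hD (i₀, j₀) (i₀, j₀))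
  rw [hcross] at hderiv
  have hprod := hderiv.unique ((hD (i, j₀) (k, j₀)).mul (hD (i₀, j) (i₀, l)))
  rw [h₀] at hprod
  simp only [kronecker_apply, one_apply, Matrix.add_apply, Matrix.smul_apply, submatrix_apply,
    Prod.mk.injEq, ite_and, smul_eq_mul, mul_ite, mul_one, mul_zero] at hprod ⊢
  split_ifs at hprod ⊢ <;> linear_combination hprod

/-- If every time-evolution unitary `e^{-itB}` of a Hermitian `B` on `H₁ ⊗ H₂`
factorizes as a tensor product of unitaries, then `B` is 1-local:
`B = A₁ ⊗ id + id ⊗ A₂` with `A₁, A₂` Hermitian. -/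
theorem stmt_14 {d1 d2 : ℕ}
    (B : Matrix (Fin d1 × Fin d2) (Fin d1 × Fin d2) ℂ) (hB : B.IsHermitian)
    (h : ∀ t : ℝ, ∃ U1 ∈ Matrix.unitaryGroup (Fin d1) ℂ,
      ∃ U2 ∈ Matrix.unitaryGroup (Fin d2) ℂ,
        NormedSpace.exp ((-(Complex.I * (t : ℂ))) • B) = U1 ⊗ₖ U2) :
    ∃ (A1 : Matrix (Fin d1) (Fin d1) ℂ) (A2 : Matrix (Fin d2) (Fin d2) ℂ),
      A1.IsHermitian ∧ A2.IsHermitian ∧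
        B = A1 ⊗ₖ (1 : Matrix (Fin d2) (Fin d2) ℂ) +
          (1 : Matrix (Fin d1) (Fin d1) ℂ) ⊗ₖ A2 := by
  rcases isEmpty_or_nonempty (Fin d1 × Fin d2) with _ | ⟨i₀, j₀⟩
  · exact ⟨0, 0, isHermitian_zero, isHermitian_zero, Subsingleton.elim _ _⟩
  have htangent := add_smul_one_eq_submatrix_kronecker_add_of_hasDerivAt (D := -Complex.I • B)
    (fun t => by obtain ⟨U₁, -, U₂, -, hU⟩ := h t; exact ⟨U₁, U₂, hU⟩)
    (by simp) (hasDerivAt_exp_neg_I_mul_smul_apply B) i₀ j₀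
  have hB₁ : B + B (i₀, j₀) (i₀, j₀) • 1 =
      B.submatrix (·, j₀) (·, j₀) ⊗ₖ 1 + 1 ⊗ₖ B.submatrix (Prod.mk i₀) (Prod.mk i₀) :=
    smul_right_injective _ (neg_ne_zero.2 Complex.I_ne_zero) <| by
      simpa only [smul_add, smul_smul, Matrix.smul_apply, submatrix_smul, Pi.smul_apply,
        smul_kronecker, kronecker_smul, smul_eq_mul] using htangent
  refine ⟨B.submatrix (·, j₀) (·, j₀) + (-B (i₀, j₀) (i₀, j₀)) • 1,
    B.submatrix (Prod.mk i₀) (Prod.mk i₀),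
    (hB.submatrix _).add (isHermitian_one.smul (IsSelfAdjoint.neg (hB.apply _ _))),
    hB.submatrix _, ?_⟩
  rw [add_kronecker, smul_kronecker, one_kronecker_one, neg_smul]
  exact (eq_sub_of_add_eq hB₁).trans (by abel)
end

section
/- Let $H_1, H_2$ be finite-dimensional complex inner product spaces with $\dim H_1 \geq 2$ and $\dim H_2 \geq 2$, and let $B$ be a Hermitian operator on $H_1 \otimes H_2$ that is not of the form $A_1 \otimes \mathrm{id} + \mathrm{id} \otimes A_2$. Then there exist $t \in \mathbb{R}$ and a pure tensor $x_1 \otimes x_2$ such that $e^{-itB}(x_1 \otimes x_2)$ is not a pure tensor. -/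
/-!
If every `e^{-itB}` maps pure tensors to pure tensors, then the `2 × 2` minors
`v (i, k) * v (j, l) - v (i, l) * v (j, k)` of `v t = e^{-itB} (x ⊗ y)` vanish identically in `t`,
so their derivative at `t = 0` vanishes as well: `B (x ⊗ y)` is tangent at `x ⊗ y` to the variety
of pure tensors. Testing this linear condition on `x ⊗ y` with `x ∈ {eᵢ, eᵢ + eⱼ}` and
`y ∈ {eₖ, eₖ + eₗ}` pins down every matrix entry of `B`, and the entries found are exactly those
of `A₁ ⊗ 1 + 1 ⊗ A₂`.
-/

open Kronecker

/-- A vector of `H₁ ⊗ H₂` (in the product basis) is a pure tensor if it is of the form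
`x₁ ⊗ x₂`. -/
def IsPureTensor {d1 d2 : ℕ} (v : Fin d1 × Fin d2 → ℂ) : Prop :=
  ∃ (x1 : Fin d1 → ℂ) (x2 : Fin d2 → ℂ), ∀ p, v p = x1 p.1 * x2 p.2

open Matrix

section Tangent

variable {ι κ R : Type*} [CommRing R]

/-- The linearization at `v` of the equations `v (i, k) * v (j, l) = v (i, l) * v (j, k)`, which
cut out the pure tensors. -/
def IsRankOneTangent (v w : ι × κ → R) : Prop :=
  ∀ i j k l, w (i, k) * v (j, l) + v (i, k) * w (j, l) = w (i, l) * v (j, k) + v (i, l) * w (j, k)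

theorem IsRankOneTangent.of_smul [NoZeroDivisors R] {v w : ι × κ → R} {c : R} (hc : c ≠ 0)
    (h : IsRankOneTangent v (c • w)) : IsRankOneTangent v w := fun i j k l =>
  mul_left_cancel₀ hc <| by
    simp only [IsRankOneTangent, Pi.smul_apply, smul_eq_mul] at h
    linear_combination h i j k l

variable [Fintype ι] [Fintype κ]

def IsTangentToPureTensors (B : Matrix (ι × κ) (ι × κ) R) : Prop :=
  ∀ (x : ι → R) (y : κ → R),
    IsRankOneTangent (fun p => x p.1 * y p.2) (B *ᵥ fun p => x p.1 * y p.2)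

namespace IsTangentToPureTensors

variable [DecidableEq ι] [DecidableEq κ] {B : Matrix (ι × κ) (ι × κ) R}

theorem apply_eq_zero (hB : IsTangentToPureTensors B) {i j : ι} {k l : κ}
    (hij : i ≠ j) (hkl : k ≠ l) : B (j, l) (i, k) = 0 := by
  have h := hB (Pi.single i 1) (Pi.single k 1) i j k l
  simpa [mulVec, dotProduct, Fintype.sum_prod_type, Pi.single_apply, hij.symm, hkl.symm] using h

theorem apply_left_eq (hB : IsTangentToPureTensors B) {i j : ι} (hij : i ≠ j) (k l : κ) :
    B (j, l) (i, l) = B (j, k) (i, k) := by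
  obtain rfl | hkl := eq_or_ne k l
  · rfl
  have h := hB (Pi.single i 1) (Pi.single k 1 + Pi.single l 1) i j k l
  simp [mulVec, dotProduct, Fintype.sum_prod_type, Pi.single_apply, mul_add,
    Finset.sum_add_distrib, hij.symm, hkl, hkl.symm] at h
  linear_combination h - hB.apply_eq_zero hij hkl + hB.apply_eq_zero hij hkl.symm

theorem apply_right_eq (hB : IsTangentToPureTensors B) (i j : ι) {k l : κ} (hkl : k ≠ l) :
    B (j, l) (j, k) = B (i, l) (i, k) := by
  obtain rfl | hij := eq_or_ne i j
  · rfl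
  have h := hB (Pi.single i 1 + Pi.single j 1) (Pi.single k 1) i j k l
  simp [mulVec, dotProduct, Fintype.sum_prod_type, Pi.single_apply, mul_add,
    Finset.sum_add_distrib, hij, hij.symm, hkl.symm] at h
  linear_combination h - hB.apply_eq_zero hij hkl + hB.apply_eq_zero hij.symm hkl

theorem diag_add_diag (hB : IsTangentToPureTensors B) (i j : ι) (k l : κ) :
    B (i, k) (i, k) + B (j, l) (j, l) = B (i, l) (i, l) + B (j, k) (j, k) := by
  obtain rfl | hij := eq_or_ne i j
  · ring
  obtain rfl | hkl := eq_or_ne k l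
  · ring
  have h := hB (Pi.single i 1 + Pi.single j 1) (Pi.single k 1 + Pi.single l 1) i j k l
  simp [mulVec, dotProduct, Fintype.sum_prod_type, Pi.single_apply, mul_add,
    Finset.sum_add_distrib, hij, hij.symm, hkl, hkl.symm] at h
  linear_combination h - hB.apply_eq_zero hij.symm hkl.symm - hB.apply_eq_zero hij hkl
    + hB.apply_eq_zero hij.symm hkl + hB.apply_eq_zero hij hkl.symm
    + hB.apply_left_eq hij.symm k l - hB.apply_left_eq hij k l
    + hB.apply_right_eq i j hkl.symm - hB.apply_right_eq i j hkl

theorem exists_eq_kronecker_one_add_one_kronecker [Nonempty ι] [Nonempty κ]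
    (hB : IsTangentToPureTensors B) :
    ∃ (A₁ : Matrix ι ι R) (A₂ : Matrix κ κ R), B = A₁ ⊗ₖ 1 + 1 ⊗ₖ A₂ := by
  obtain ⟨i₀⟩ := ‹Nonempty ι›
  obtain ⟨k₀⟩ := ‹Nonempty κ›
  -- Slices of `B` through a base point `(i₀, k₀)`; the diagonal entry they share is counted once.
  refine ⟨of fun i a => B (i, k₀) (a, k₀),
    of (fun k b => B (i₀, k) (i₀, b)) - B (i₀, k₀) (i₀, k₀) • 1, ?_⟩
  ext ⟨i, k⟩ ⟨a, b⟩
  obtain rfl | hia := eq_or_ne i a <;> obtain rfl | hkb := eq_or_ne k b <;>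
    simp [one_apply, *]
  · linear_combination hB.diag_add_diag i i₀ k k₀
  · exact hB.apply_right_eq i₀ i hkb.symm
  · exact hB.apply_left_eq hia.symm k₀ k
  · exact hB.apply_eq_zero hia.symm hkb.symm

end IsTangentToPureTensors

end Tangent

theorem Matrix.hasDerivAt_exp_ofReal_smul_mulVec {n : Type*} [Fintype n] [DecidableEq n]
    (M : Matrix n n ℂ) (v : n → ℂ) :
    HasDerivAt (fun t : ℝ => NormedSpace.exp ((t : ℂ) • M) *ᵥ v) (M *ᵥ v) 0 := by
  let : NormedRing (Matrix n n ℂ) := Matrix.linftyOpNormedRing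
  let : NormedAlgebra ℂ (Matrix n n ℂ) := Matrix.linftyOpNormedAlgebra
  have hexp : HasDerivAt (fun z : ℂ => NormedSpace.exp (z • M)) M 0 := by
    have h := hasDerivAt_exp_smul_const M (0 : ℂ)
    rw [zero_smul, NormedSpace.exp_zero, one_mul] at h
    exact h
  have hvec : HasDerivAt (fun z : ℂ => NormedSpace.exp (z • M) *ᵥ v) (M *ᵥ v) ((0 : ℝ) : ℂ) := by
    exact (LinearMap.toContinuousLinearMap ((mulVecBilin ℂ ℂ).flip v)).hasFDerivAt
      |>.comp_hasDerivAt (0 : ℂ) hexp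
  exact hasDerivAt_pi.2 fun p => (hasDerivAt_pi.1 hvec p).comp_ofReal

section PureTensor

variable {d1 d2 : ℕ}

theorem IsPureTensor.mul_mul_eq {v : Fin d1 × Fin d2 → ℂ} (hv : IsPureTensor v) (i j : Fin d1)
    (k l : Fin d2) : v (i, k) * v (j, l) = v (i, l) * v (j, k) := by
  obtain ⟨x, y, hv⟩ := hv
  simp only [hv]
  ring

theorem isRankOneTangent_of_hasDerivAt {u : ℝ → Fin d1 × Fin d2 → ℂ}
    {w : Fin d1 × Fin d2 → ℂ} (hu : HasDerivAt u w 0) (hpure : ∀ t, IsPureTensor (u t)) :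
    IsRankOneTangent (u 0) w := by
  intro i j k l
  have hcoord := hasDerivAt_pi.1 hu
  have hminor := ((hcoord (i, k)).fun_mul (hcoord (j, l))).fun_sub
    ((hcoord (i, l)).fun_mul (hcoord (j, k)))
  have hconst : (fun t => u t (i, k) * u t (j, l) - u t (i, l) * u t (j, k)) = fun _ => 0 :=
    funext fun t => sub_eq_zero.2 ((hpure t).mul_mul_eq i j k l)
  rw [hconst] at hminor
  exact sub_eq_zero.1 (hminor.unique (hasDerivAt_const 0 0))

theorem isTangentToPureTensors_of_isPureTensor_exp
    (B : Matrix (Fin d1 × Fin d2) (Fin d1 × Fin d2) ℂ)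
    (hB : ∀ (t : ℝ) (x1 : Fin d1 → ℂ) (x2 : Fin d2 → ℂ),
      IsPureTensor
        (NormedSpace.exp ((-(Complex.I * (t : ℂ))) • B) *ᵥ fun p => x1 p.1 * x2 p.2)) :
    IsTangentToPureTensors B := by
  intro x y
  have hsmul (t : ℝ) : (t : ℂ) • (-Complex.I • B) = (-(Complex.I * t)) • B := by
    rw [smul_smul]
    ring_nf
  have h := isRankOneTangent_of_hasDerivAt
    (hasDerivAt_exp_ofReal_smul_mulVec (-Complex.I • B) fun p => x p.1 * y p.2)
    fun t => hsmul t ▸ hB t x y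
  rw [Complex.ofReal_zero, zero_smul, NormedSpace.exp_zero, one_mulVec, smul_mulVec] at h
  exact h.of_smul (neg_ne_zero.2 Complex.I_ne_zero)

end PureTensor

theorem stmt_16_general {d1 d2 : ℕ} (hd1 : 2 ≤ d1) (hd2 : 2 ≤ d2)
    (B : Matrix (Fin d1 × Fin d2) (Fin d1 × Fin d2) ℂ)
    (h : ¬ ∃ (A1 : Matrix (Fin d1) (Fin d1) ℂ) (A2 : Matrix (Fin d2) (Fin d2) ℂ),
      B = A1 ⊗ₖ (1 : Matrix (Fin d2) (Fin d2) ℂ) +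
        (1 : Matrix (Fin d1) (Fin d1) ℂ) ⊗ₖ A2) :
    ∃ (t : ℝ) (x1 : Fin d1 → ℂ) (x2 : Fin d2 → ℂ),
      ¬ IsPureTensor
        ((NormedSpace.exp ((-(Complex.I * (t : ℂ))) • B)).mulVec
          (fun p => x1 p.1 * x2 p.2)) := by
  by_contra! hpure
  have : Nonempty (Fin d1) := ⟨⟨0, by omega⟩⟩
  have : Nonempty (Fin d2) := ⟨⟨0, by omega⟩⟩
  exact h
    (isTangentToPureTensors_of_isPureTensor_exp B hpure).exists_eq_kronecker_one_add_one_kronecker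

/-- A non-1-local Hermitian `B` on `H₁ ⊗ H₂` (with both factors of dimension `≥ 2`)
generates entanglement: some pure tensor is mapped by some `e^{-itB}` to a vector that
is not a pure tensor. -/
theorem stmt_16 {d1 d2 : ℕ} (hd1 : 2 ≤ d1) (hd2 : 2 ≤ d2)
    (B : Matrix (Fin d1 × Fin d2) (Fin d1 × Fin d2) ℂ) (hB : B.IsHermitian)
    (h : ¬ ∃ (A1 : Matrix (Fin d1) (Fin d1) ℂ) (A2 : Matrix (Fin d2) (Fin d2) ℂ),
      B = A1 ⊗ₖ (1 : Matrix (Fin d2) (Fin d2) ℂ) +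
        (1 : Matrix (Fin d1) (Fin d1) ℂ) ⊗ₖ A2) :
    ∃ (t : ℝ) (x1 : Fin d1 → ℂ) (x2 : Fin d2 → ℂ),
      ¬ IsPureTensor
        ((NormedSpace.exp ((-(Complex.I * (t : ℂ))) • B)).mulVec
          (fun p => x1 p.1 * x2 p.2)) :=
  stmt_16_general hd1 hd2 B h
end
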